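/- arXiv:1105.0215 — 3 statements merged into one kernel-verified Lean document; each statement's English description precedes it below -/
import Mathlib

section
/- The function g(β) = σ² + α ∫₀^∞ (pβ/(p+β)) e^{-p} dp, defined for β > 0 with σ² > 0 and α ≥ 0, has at least one fixed point β* > 0. -/
open MeasureTheory Set

/-!
The integrand `p β / (p + β) e^{-p}` is squeezed between `0` and `p e^{-p}`, whose integral is
`Γ(2) = 1`, so the right-hand side `g(β) = σ² + α F(β)` maps `[σ², σ² + α]` into itself; it is
continuous there by dominated convergence, and a continuous self-map of a compact interval has a
fixed point.
-/

lemma mul_div_add_le_left {p β : ℝ} (hp : 0 ≤ p) (hβ : 0 ≤ β) : p * β / (p + β) ≤ p := by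
  rcases (add_nonneg hp hβ).eq_or_lt with h | h
  · simp [← h, hp]
  · rw [div_le_iff₀ h]
    nlinarith

lemma integrableOn_mul_exp_neg_Ioi : IntegrableOn (fun p : ℝ => p * Real.exp (-p)) (Ioi 0) := by
  refine (Real.GammaIntegral_convergent two_pos).congr_fun (fun p _ => ?_) measurableSet_Ioi
  norm_num [mul_comm]

lemma integral_mul_exp_neg_Ioi : ∫ p in Ioi (0 : ℝ), p * Real.exp (-p) = 1 := by
  rw [← Real.Gamma_two, Real.Gamma_eq_integral two_pos]
  refine setIntegral_congr_fun measurableSet_Ioi fun p _ => ?_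
  norm_num [mul_comm]

noncomputable def interferenceIntegral (β : ℝ) : ℝ :=
  ∫ p in Ioi (0 : ℝ), (p * β / (p + β)) * Real.exp (-p)

namespace interferenceIntegral

lemma integrand_nonneg {β p : ℝ} (hβ : 0 ≤ β) (hp : 0 ≤ p) :
    0 ≤ (p * β / (p + β)) * Real.exp (-p) := by
  positivity

lemma integrand_le {β p : ℝ} (hβ : 0 ≤ β) (hp : 0 ≤ p) :
    (p * β / (p + β)) * Real.exp (-p) ≤ p * Real.exp (-p) :=
  mul_le_mul_of_nonneg_right (mul_div_add_le_left hp hβ) (Real.exp_pos _).le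

lemma norm_integrand_le {β p : ℝ} (hβ : 0 ≤ β) (hp : 0 ≤ p) :
    ‖(p * β / (p + β)) * Real.exp (-p)‖ ≤ p * Real.exp (-p) := by
  rw [Real.norm_of_nonneg (integrand_nonneg hβ hp)]
  exact integrand_le hβ hp

lemma aestronglyMeasurable_integrand (β : ℝ) :
    AEStronglyMeasurable (fun p : ℝ => (p * β / (p + β)) * Real.exp (-p))
      (volume.restrict (Ioi 0)) := by
  fun_prop

lemma norm_integrand_le_ae {β : ℝ} (hβ : 0 ≤ β) :
    ∀ᵐ p ∂(volume.restrict (Ioi (0 : ℝ))),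
      ‖(p * β / (p + β)) * Real.exp (-p)‖ ≤ p * Real.exp (-p) :=
  (ae_restrict_iff' measurableSet_Ioi).2 <| .of_forall fun _ hp => norm_integrand_le hβ (le_of_lt hp)

lemma integrableOn_integrand {β : ℝ} (hβ : 0 ≤ β) :
    IntegrableOn (fun p : ℝ => (p * β / (p + β)) * Real.exp (-p)) (Ioi 0) :=
  integrableOn_mul_exp_neg_Ioi.mono' (aestronglyMeasurable_integrand β) (norm_integrand_le_ae hβ)

lemma nonneg {β : ℝ} (hβ : 0 ≤ β) : 0 ≤ interferenceIntegral β :=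
  setIntegral_nonneg measurableSet_Ioi fun _ hp => integrand_nonneg hβ (le_of_lt hp)

lemma le_one {β : ℝ} (hβ : 0 ≤ β) : interferenceIntegral β ≤ 1 := by
  rw [← integral_mul_exp_neg_Ioi]
  exact setIntegral_mono_on (integrableOn_integrand hβ) integrableOn_mul_exp_neg_Ioi
    measurableSet_Ioi fun _ hp => integrand_le hβ (le_of_lt hp)

lemma continuousAt {β₀ : ℝ} (hβ₀ : 0 < β₀) : ContinuousAt interferenceIntegral β₀ := by
  refine continuousAt_of_dominated (.of_forall aestronglyMeasurable_integrand)
    ?_ integrableOn_mul_exp_neg_Ioi ?_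
  · filter_upwards [eventually_gt_nhds hβ₀] with β hβ
    exact norm_integrand_le_ae hβ.le
  · refine (ae_restrict_iff' measurableSet_Ioi).2 (.of_forall fun p hp => ?_)
    have hne : p + β₀ ≠ 0 := by linarith [mem_Ioi.mp hp]
    fun_prop (disch := exact hne)

end interferenceIntegral

theorem fixed_point_exists (σ2 α : ℝ) (hσ : 0 < σ2) (hα : 0 ≤ α) :
    ∃ β : ℝ, 0 < β ∧
      β = σ2 + α * ∫ p in Ioi (0:ℝ), (p * β / (p + β)) * Real.exp (-p) := by
  have hpos : ∀ β ∈ Icc σ2 (σ2 + α), 0 < β := fun β hβ => hσ.trans_le hβ.1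
  have hcont : ContinuousOn (fun β => σ2 + α * interferenceIntegral β) (Icc σ2 (σ2 + α)) :=
    fun β hβ => (continuousAt_const.add
      (continuousAt_const.mul (interferenceIntegral.continuousAt (hpos β hβ)))).continuousWithinAt
  have hmaps : MapsTo (fun β => σ2 + α * interferenceIntegral β)
      (Icc σ2 (σ2 + α)) (Icc σ2 (σ2 + α)) := fun β hβ => by
    have h0 := interferenceIntegral.nonneg (hpos β hβ).le
    have h1 := interferenceIntegral.le_one (hpos β hβ).le
    constructor <;> nlinarith
  obtain ⟨β, hβ, hfix⟩ := exists_mem_Icc_isFixedPt_of_mapsTo hcont (by linarith) hmaps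
  exact ⟨β, hpos β hβ, hfix.symm⟩
end

section
/- For σ² > 0 and 0 ≤ α < 1, the map g(β) = σ² + α ∫₀^∞ (pβ/(p+β)) e^{-p} dp has a unique fixed point β* > 0, and for any starting point β₀ > 0 the iteration β_{n+1} = g(β_n) converges to β*. -/
open MeasureTheory Set Filter Function

/-!
For `p > 0` the kernel `β ↦ p β / (p + β)` is 1-Lipschitz on `[0, ∞)`, and `e^{-p}` has total
mass 1 on `(0, ∞)`, so `g` is `α`-Lipschitz on `[0, ∞)`; it also maps `[0, ∞)` into `[σ², ∞)`.
Banach's fixed point theorem on the closed set `[0, ∞)` then gives the fixed point, its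
uniqueness, and the convergence of the iteration from every starting point.
-/

theorem exists_fixedPoint_tendsto_iterate_of_lipschitzOnWith {X : Type*} [MetricSpace X]
    {f : X → X} {K : NNReal} {s : Set X} (hsc : IsComplete s) (hs : s.Nonempty)
    (hsf : MapsTo f s s) (hK : K < 1) (hf : LipschitzOnWith K f s) :
    ∃ x ∈ s, IsFixedPt f x ∧ (∀ y ∈ s, IsFixedPt f y → y = x) ∧
      ∀ y ∈ s, Tendsto (fun n => f^[n] y) atTop (nhds x) := by
  have hc : ContractingWith K (hsf.restrict f s s) := ⟨hK, hf.mapsToRestrict hsf⟩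
  have huniq : ∀ x ∈ s, ∀ y ∈ s, IsFixedPt f x → IsFixedPt f y → x = y := by
    intro x hx y hy hfx hfy
    have h := hf.dist_le_mul x hx y hy
    rw [hfx.eq, hfy.eq] at h
    have hK' : (K : ℝ) < 1 := hK
    exact dist_le_zero.mp (by nlinarith [dist_nonneg (x := x) (y := y)])
  obtain ⟨x₀, hx₀⟩ := hs
  set x := ContractingWith.efixedPoint' f hsc hsf hc x₀ hx₀ (edist_ne_top _ _)
  have hxs : x ∈ s := ContractingWith.efixedPoint_mem' hsc hsf hc hx₀ _
  have hfx : IsFixedPt f x := ContractingWith.efixedPoint_isFixedPt' hsc hsf hc hx₀ _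
  refine ⟨x, hxs, hfx, fun y hy hfy => huniq y hy x hxs hfy hfx, fun y hy => ?_⟩
  have hy_lim := ContractingWith.tendsto_iterate_efixedPoint' hsc hsf hc hy (edist_ne_top _ _)
  rwa [huniq _ (ContractingWith.efixedPoint_mem' hsc hsf hc hy _) x hxs
    (ContractingWith.efixedPoint_isFixedPt' hsc hsf hc hy _) hfx] at hy_lim

theorem abs_mul_div_add_sub_mul_div_add_le {p a b : ℝ} (hp : 0 < p) (ha : 0 ≤ a) (hb : 0 ≤ b) :
    |p * a / (p + a) - p * b / (p + b)| ≤ |a - b| := by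
  have hpa : 0 < p + a := by linarith
  have hpb : 0 < p + b := by linarith
  have hdiff : p * a / (p + a) - p * b / (p + b) = p ^ 2 / ((p + a) * (p + b)) * (a - b) := by
    field_simp
    ring
  have hfactor : p ^ 2 / ((p + a) * (p + b)) ≤ 1 :=
    (div_le_one (by positivity)).mpr (by nlinarith)
  rw [hdiff, abs_mul, abs_of_nonneg (by positivity)]
  exact mul_le_of_le_one_left (abs_nonneg _) hfactor

noncomputable def interference (β : ℝ) : ℝ :=
  ∫ p in Ioi (0 : ℝ), p * β / (p + β) * Real.exp (-p)

theorem integrableOn_interference_integrand {β : ℝ} (hβ : 0 ≤ β) :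
    IntegrableOn (fun p : ℝ => p * β / (p + β) * Real.exp (-p)) (Ioi 0) := by
  refine ((integrableOn_exp_neg_Ioi 0).const_mul |β|).mono' (by fun_prop) ?_
  filter_upwards [ae_restrict_mem measurableSet_Ioi] with p hp
  have hkernel := abs_mul_div_add_sub_mul_div_add_le hp hβ le_rfl
  simp only [mul_zero, zero_div, sub_zero] at hkernel
  rw [Real.norm_eq_abs, abs_mul, Real.abs_exp]
  exact mul_le_mul_of_nonneg_right hkernel (Real.exp_pos _).le

theorem interference_nonneg {β : ℝ} (hβ : 0 ≤ β) : 0 ≤ interference β :=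
  setIntegral_nonneg measurableSet_Ioi fun p (hp : 0 < p) => by positivity

theorem abs_interference_sub_interference_le {a b : ℝ} (ha : 0 ≤ a) (hb : 0 ≤ b) :
    |interference a - interference b| ≤ |a - b| := by
  rw [interference, interference, ← Real.norm_eq_abs,
    ← integral_sub (integrableOn_interference_integrand ha) (integrableOn_interference_integrand hb)]
  calc ‖∫ p in Ioi (0 : ℝ), (p * a / (p + a) * Real.exp (-p) - p * b / (p + b) * Real.exp (-p))‖
      ≤ ∫ p in Ioi (0 : ℝ), |a - b| * Real.exp (-p) := by
        refine norm_integral_le_of_norm_le ((integrableOn_exp_neg_Ioi 0).const_mul _) ?_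
        filter_upwards [ae_restrict_mem measurableSet_Ioi] with p hp
        rw [← sub_mul, Real.norm_eq_abs, abs_mul, Real.abs_exp]
        exact mul_le_mul_of_nonneg_right (abs_mul_div_add_sub_mul_div_add_le hp ha hb)
          (Real.exp_pos _).le
    _ = |a - b| := by rw [integral_const_mul, integral_exp_neg_Ioi_zero, mul_one]

theorem fixed_point_unique_and_iteration_converges
    (σ2 α : ℝ) (hσ : 0 < σ2) (hα0 : 0 ≤ α) (hα1 : α < 1) :
    ∃ βstar : ℝ, (0 < βstar ∧
        βstar = σ2 + α * ∫ p in Ioi (0:ℝ), (p * βstar / (p + βstar)) * Real.exp (-p)) ∧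
      (∀ β : ℝ, 0 < β →
        β = σ2 + α * ∫ p in Ioi (0:ℝ), (p * β / (p + β)) * Real.exp (-p) → β = βstar) ∧
      ∀ β0 : ℝ, 0 < β0 →
        Tendsto (fun n : ℕ =>
            (fun β : ℝ => σ2 + α * ∫ p in Ioi (0:ℝ), (p * β / (p + β)) * Real.exp (-p))^[n] β0)
          atTop (nhds βstar) := by
  set g : ℝ → ℝ := fun β => σ2 + α * interference β
  have hg_ge : ∀ β ∈ Ici (0 : ℝ), σ2 ≤ g β := fun β hβ =>
    le_add_of_nonneg_right (mul_nonneg hα0 (interference_nonneg hβ))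
  have hmaps : MapsTo g (Ici 0) (Ici 0) := fun β hβ => hσ.le.trans (hg_ge β hβ)
  have hlip : LipschitzOnWith ⟨α, hα0⟩ g (Ici 0) := by
    refine LipschitzOnWith.of_dist_le_mul fun a ha b hb => ?_
    rw [Real.dist_eq, Real.dist_eq, add_sub_add_left_eq_sub, ← mul_sub, abs_mul, abs_of_nonneg hα0]
    exact mul_le_mul_of_nonneg_left (abs_interference_sub_interference_le ha hb) hα0
  obtain ⟨βstar, hmem, hfix, huniq, htend⟩ :=
    exists_fixedPoint_tendsto_iterate_of_lipschitzOnWith isClosed_Ici.isComplete nonempty_Ici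
      hmaps (show (⟨α, hα0⟩ : NNReal) < 1 from hα1) hlip
  exact ⟨βstar, ⟨hσ.trans_le (hfix ▸ hg_ge βstar hmem), hfix.symm⟩,
    fun β hβ hβfix => huniq β hβ.le hβfix.symm, fun β0 hβ0 => htend β0 hβ0.le⟩
end

section
/- Let A(s,t) and S(s,t) be independent nonnegative stationary cumulative arrival and service processes of a FIFO queue with departures D, and suppose for some θ > 0 and ε ∈ (0,1) and d ≥ 0 that Σ_{s=d}^{∞} M_A(θ, s−d) M̂_S(θ, s) ≤ ε, where M_A(θ,u) = E[e^{θA(0,u)}] and M̂_S(θ,u) = E[e^{−θS(0,u)}]. Then for each time t, the probability that the virtual delay at t exceeds d is at most Σ_{s=d}^{∞} M_A(θ, s−d) M̂_S(θ, s) ≤ ε, by Chernoff's bound and the union bound applied to P{∃ s ≥ d : A(0, t−d) − S(0, t) component exceeds 0}. -/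
/-!
Bound the event `∃ u, A u - S (u + d) > 0` by the sum of the probabilities of its pieces (union
bound) and each piece by Chernoff's inequality `P{Z ≥ 0} ≤ E[e^{θ Z}]`. For `Z = A u - S (u + d)`
independence factors `E[e^{θ Z}]` into `M_A(θ, u) · M̂_S(θ, u + d)`.
-/

open MeasureTheory ProbabilityTheory Real

namespace ProbabilityTheory

variable {Ω : Type*} {m : MeasurableSpace Ω} {μ : Measure Ω} {X Y : Ω → ℝ} {t : ℝ}

theorem IndepFun.mgf_sub (h : X ⟂ᵢ[μ] Y)
    (hX : AEStronglyMeasurable (fun ω => exp (t * X ω)) μ)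
    (hY : AEStronglyMeasurable (fun ω => exp (-t * Y ω)) μ) :
    mgf (X - Y) μ t = mgf X μ t * mgf Y μ (-t) := by
  have hneg : X ⟂ᵢ[μ] (-Y) := h.comp measurable_id measurable_neg
  rw [sub_eq_add_neg, ← mgf_neg]
  refine hneg.mgf_add hX ?_
  simpa only [Pi.neg_apply, mul_neg, neg_mul] using hY

theorem IndepFun.integrable_exp_mul_sub (h : X ⟂ᵢ[μ] Y)
    (hX : Integrable (fun ω => exp (t * X ω)) μ)
    (hY : Integrable (fun ω => exp (-t * Y ω)) μ) :
    Integrable (fun ω => exp (t * (X - Y) ω)) μ := by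
  have hneg : X ⟂ᵢ[μ] (-Y) := h.comp measurable_id measurable_neg
  rw [sub_eq_add_neg]
  refine hneg.integrable_exp_mul_add hX ?_
  simpa only [Pi.neg_apply, mul_neg, neg_mul] using hY

theorem measure_nonneg_le_mgf [IsFiniteMeasure μ] (ht : 0 ≤ t)
    (h_int : Integrable (fun ω => exp (t * X ω)) μ) :
    μ {ω | 0 ≤ X ω} ≤ ENNReal.ofReal (mgf X μ t) := by
  rw [← ofReal_measureReal]
  refine ENNReal.ofReal_le_ofReal ?_
  simpa using measure_ge_le_exp_mul_mgf 0 ht h_int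

theorem IndepFun.measure_sub_nonneg_le [IsFiniteMeasure μ] (h : X ⟂ᵢ[μ] Y) (ht : 0 ≤ t)
    (hX : Integrable (fun ω => exp (t * X ω)) μ)
    (hY : Integrable (fun ω => exp (-t * Y ω)) μ) :
    μ {ω | 0 ≤ X ω - Y ω} ≤ ENNReal.ofReal (mgf X μ t * mgf Y μ (-t)) := by
  rw [← h.mgf_sub hX.aestronglyMeasurable hY.aestronglyMeasurable]
  exact measure_nonneg_le_mgf ht (h.integrable_exp_mul_sub hX hY)

end ProbabilityTheory

theorem MeasureTheory.measure_iUnion_le_ofReal_tsum {Ω ι : Type*} [MeasurableSpace Ω]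
    [Countable ι] {μ : Measure Ω} {s : ι → Set Ω} {b : ι → ℝ}
    (hs : ∀ i, μ (s i) ≤ ENNReal.ofReal (b i)) (hb : ∀ i, 0 ≤ b i) (hsum : Summable b) :
    μ (⋃ i, s i) ≤ ENNReal.ofReal (∑' i, b i) :=
  calc μ (⋃ i, s i) ≤ ∑' i, μ (s i) := measure_iUnion_le s
    _ ≤ ∑' i, ENNReal.ofReal (b i) := ENNReal.tsum_le_tsum hs
    _ = ENNReal.ofReal (∑' i, b i) := (ENNReal.ofReal_tsum_of_nonneg hb hsum).symm

theorem stochastic_delay_bound_general {Ω : Type*} [MeasureSpace Ω]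
    [IsProbabilityMeasure (ℙ : Measure Ω)]
    (A S : ℕ → Ω → ℝ) (θ ε : ℝ) (hθ : 0 < θ) (d : ℕ)
    (hind : ∀ u : ℕ, IndepFun (A u) (S (u + d)) ℙ)
    (MA MS : ℕ → ℝ)
    (hMAi : ∀ u, Integrable (fun ω => Real.exp (θ * A u ω)) ℙ)
    (hMA : ∀ u, ∫ ω, Real.exp (θ * A u ω) ∂ℙ = MA u)
    (hMSi : ∀ s, Integrable (fun ω => Real.exp (-θ * S s ω)) ℙ)
    (hMS : ∀ s, ∫ ω, Real.exp (-θ * S s ω) ∂ℙ = MS s)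
    (hsum : Summable (fun u : ℕ => MA u * MS (u + d)))
    (hbound : ∑' u : ℕ, MA u * MS (u + d) ≤ ε) :
    ℙ {ω | ∃ u : ℕ, A u ω - S (u + d) ω > 0}
        ≤ ENNReal.ofReal (∑' u : ℕ, MA u * MS (u + d)) ∧
    ℙ {ω | ∃ u : ℕ, A u ω - S (u + d) ω > 0} ≤ ENNReal.ofReal ε := by
  have hMA_mgf : ∀ u, MA u = mgf (A u) ℙ θ := fun u => (hMA u).symm
  have hMS_mgf : ∀ s, MS s = mgf (S s) ℙ (-θ) := fun s => (hMS s).symm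
  have hterm : ∀ u, ℙ {ω | A u ω - S (u + d) ω > 0} ≤ ENNReal.ofReal (MA u * MS (u + d)) := by
    intro u
    have hsub : {ω | A u ω - S (u + d) ω > 0} ⊆ {ω | 0 ≤ A u ω - S (u + d) ω} :=
      fun _ hω => le_of_lt (Set.mem_ofPred.1 hω)
    rw [hMA_mgf, hMS_mgf]
    exact (measure_mono hsub).trans
      ((hind u).measure_sub_nonneg_le hθ.le (hMAi u) (hMSi (u + d)))
  have hunion := measure_iUnion_le_ofReal_tsum hterm
    (fun u => by rw [hMA_mgf, hMS_mgf]; exact mul_nonneg mgf_nonneg mgf_nonneg) hsum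
  rw [← Set.ofPred_exists] at hunion
  exact ⟨hunion, hunion.trans (ENNReal.ofReal_le_ofReal hbound)⟩

theorem stochastic_delay_bound {Ω : Type*} [MeasureSpace Ω]
    [IsProbabilityMeasure (ℙ : Measure Ω)]
    (A S : ℕ → Ω → ℝ) (θ ε : ℝ) (hθ : 0 < θ) (hε0 : 0 < ε) (hε1 : ε < 1) (d : ℕ)
    (hAnn : ∀ u ω, 0 ≤ A u ω) (hSnn : ∀ s ω, 0 ≤ S s ω)
    (hAm : ∀ u, Measurable (A u)) (hSm : ∀ s, Measurable (S s))
    (hind : ∀ u : ℕ, IndepFun (A u) (S (u + d)) ℙ)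
    (MA MS : ℕ → ℝ)
    (hMAi : ∀ u, Integrable (fun ω => Real.exp (θ * A u ω)) ℙ)
    (hMA : ∀ u, ∫ ω, Real.exp (θ * A u ω) ∂ℙ = MA u)
    (hMSi : ∀ s, Integrable (fun ω => Real.exp (-θ * S s ω)) ℙ)
    (hMS : ∀ s, ∫ ω, Real.exp (-θ * S s ω) ∂ℙ = MS s)
    (hsum : Summable (fun u : ℕ => MA u * MS (u + d)))
    (hbound : ∑' u : ℕ, MA u * MS (u + d) ≤ ε) :
    ℙ {ω | ∃ u : ℕ, A u ω - S (u + d) ω > 0}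
        ≤ ENNReal.ofReal (∑' u : ℕ, MA u * MS (u + d)) ∧
    ℙ {ω | ∃ u : ℕ, A u ω - S (u + d) ω > 0} ≤ ENNReal.ofReal ε :=
  stochastic_delay_bound_general A S θ ε hθ d hind MA MS hMAi hMA hMSi hMS hsum hbound
end
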